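/- arXiv:2209.13637 — 2 statements merged into one kernel-verified Lean document; each statement's English description precedes it below -/
import Mathlib

section
/- For every integer k ≥ 2 and real R ≥ 0, the function 𝔅(R) = (R ln 2 / k)·g_{k−1}(R) − g_k(R) is nonpositive; equivalently 𝔅 is decreasing with 𝔅(0) = 0, since 𝔅''(R) = −(ln 2)² (R ln 2)^{k−1} 2^R / k! ≤ 0 and 𝔅'(0) = 0. -/
noncomputable def g (k : ℕ) (R : ℝ) : ℝ :=
  (-1)^k + (2:ℝ)^R * ∑ j ∈ Finset.range k,
    (-1)^j * (R * Real.log 2)^(k - j - 1) / (Nat.factorial (k - j - 1))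


noncomputable def S (k : ℕ) (L : ℝ) : ℝ := ∑ i ∈ Finset.range k, (-L)^i / (Nat.factorial i)

noncomputable def A (k : ℕ) (L : ℝ) : ℝ := (-1)^k * (Real.exp (-L) - S k L)

noncomputable def F (m : ℕ) (L : ℝ) : ℝ :=
  ((m : ℝ)+1) * L^m / (Nat.factorial m) - (L + m + 1) * A m L

lemma A_succ (m : ℕ) (L : ℝ) : A (m+1) L + A m L = L^m / (Nat.factorial m) := by
  have h : ((-1:ℝ))^m * (-L)^m = L^m := by rw [← mul_pow]; ring_nf
  simp only [A, S, Finset.sum_range_succ, pow_succ]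
  linear_combination h / (Nat.factorial m : ℝ)

lemma S_hasDeriv (k : ℕ) (L : ℝ) :
    HasDerivAt (fun L => S (k+1) L) (-(S k L)) L := by
  have hterm : ∀ i ∈ Finset.range (k+1),
      HasDerivAt (fun L : ℝ => (-L)^i / (Nat.factorial i))
        (((i : ℝ) * (-L)^(i-1) * (-1)) / (Nat.factorial i)) L := by
    intro i _
    have h1 : HasDerivAt (fun L : ℝ => -L) (-1) L := (hasDerivAt_id L).neg
    have h2 := (hasDerivAt_pow i (-L)).comp L h1
    exact h2.div_const _
  have h := HasDerivAt.fun_sum hterm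
  convert h using 1
  · rfl
  · rfl
  · rfl
  rw [Finset.sum_range_succ']
  simp only [Nat.cast_zero, zero_mul, pow_zero, Nat.factorial_zero, zero_div, add_zero]
  rw [S, ← Finset.sum_neg_distrib]
  apply Finset.sum_congr rfl
  intro i _
  have hf : (Nat.factorial (i+1) : ℝ) = (i+1) * Nat.factorial i := by
    rw [Nat.factorial_succ]; push_cast; ring
  have hfi : (Nat.factorial i : ℝ) ≠ 0 := Nat.cast_ne_zero.mpr (Nat.factorial_ne_zero i)
  simp only [Nat.add_sub_cancel]
  rw [hf]
  field_simp
  push_cast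
  ring

lemma A_hasDeriv (m : ℕ) (L : ℝ) : HasDerivAt (fun L => A (m+1) L) (A m L) L := by
  have h1 : HasDerivAt (fun L : ℝ => Real.exp (-L)) (-Real.exp (-L)) L := by
    have := (Real.hasDerivAt_exp (-L)).comp L ((hasDerivAt_id L).neg)
    convert this using 1
    · rfl
    · rfl
    · rfl
    · ring
  have h2 := (h1.sub (S_hasDeriv m L)).const_mul ((-1:ℝ)^(m+1))
  convert h2 using 1
  · rfl
  · rfl
  · rfl
  simp only [A, pow_succ]
  ring

lemma F_hasDeriv (m : ℕ) (L : ℝ) : HasDerivAt (fun L => F (m+1) L) (F m L) L := by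
  have h1 : HasDerivAt (fun L : ℝ => ((m:ℝ)+1+1) * L^(m+1) / (Nat.factorial (m+1)))
      (((m:ℝ)+1+1) * (((m:ℝ)+1) * L^m) / (Nat.factorial (m+1))) L := by
    have := ((hasDerivAt_pow (m+1) L).const_mul ((m:ℝ)+1+1)).div_const ((Nat.factorial (m+1) : ℝ))
    convert this using 1
    · rfl
    · rfl
    push_cast
    ring
  have h2 : HasDerivAt (fun L : ℝ => (L + (m+1) + 1) * A (m+1) L)
      (1 * A (m+1) L + (L + (m+1) + 1) * A m L) L := by
    have hl : HasDerivAt (fun L : ℝ => L + ((m:ℝ)+1) + 1) 1 L := by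
      simpa using ((hasDerivAt_id L).add_const ((m:ℝ)+1)).add_const 1
    exact hl.mul (A_hasDeriv m L)
  have h := h1.sub h2
  have key : A (m+1) L = L^m / (Nat.factorial m) - A m L := by
    have := A_succ m L; linarith
  convert h using 1
  · rfl
  · rfl
  · funext x; simp only [F, Pi.sub_apply]; push_cast; ring
  · simp only [F]
    rw [key]
    have hf : (Nat.factorial (m+1) : ℝ) = ((m:ℝ)+1) * Nat.factorial m := by
      rw [Nat.factorial_succ]; push_cast; ring
    have hfi : (Nat.factorial m : ℝ) ≠ 0 := Nat.cast_ne_zero.mpr (Nat.factorial_ne_zero m)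
    rw [hf]
    field_simp
    ring

lemma F_nonneg : ∀ (m : ℕ) (L : ℝ), 0 ≤ L → 0 ≤ F m L := by
  intro m
  induction m with
  | zero =>
    intro L hL
    simp only [F, A, S, Finset.range_zero, Finset.sum_empty, Nat.factorial_zero]
    have h := Real.add_one_le_exp L
    have he : 0 < Real.exp (-L) := Real.exp_pos _
    have : (L + 1) * Real.exp (-L) ≤ Real.exp L * Real.exp (-L) := by nlinarith
    rw [← Real.exp_add] at this
    simp at this ⊢
    nlinarith [this]
  | succ m ih =>
    intro L hL
    have h0 : F (m+1) 0 = 0 := by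
      have hS : S (m+1) 0 = 1 := by
        simp [S, Finset.sum_range_succ']
      simp [F, A, hS]
    have hmono : MonotoneOn (fun L => F (m+1) L) (Set.Ici (0:ℝ)) := by
      apply monotoneOn_of_deriv_nonneg (convex_Ici 0)
      · exact (Differentiable.continuous (fun x => (F_hasDeriv m x).differentiableAt)).continuousOn
      · intro x _
        exact (F_hasDeriv m x).differentiableAt.differentiableWithinAt
      · intro x hx
        rw [(F_hasDeriv m x).deriv]
        rw [interior_Ici] at hx
        exact ih x (le_of_lt hx)
    have := hmono (Set.self_mem_Ici) (Set.mem_Ici.mpr hL) hL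
    simpa [h0] using this

lemma sum_reflect (n : ℕ) (L : ℝ) :
    ∑ j ∈ Finset.range n, (-1:ℝ)^j * L^(n-j-1) / (Nat.factorial (n-j-1))
      = (-1:ℝ)^(n-1) * S n L := by
  have h1 : ∑ j ∈ Finset.range n, (-1:ℝ)^j * L^(n-j-1) / (Nat.factorial (n-j-1))
      = ∑ j ∈ Finset.range n, (-1:ℝ)^(n-1-(n-1-j)) * L^(n-1-j) / (Nat.factorial (n-1-j)) := by
    apply Finset.sum_congr rfl
    intro j hj
    have hj' := Finset.mem_range.mp hj
    have e1 : n - 1 - (n-1-j) = j := by omega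
    have e2 : n - j - 1 = n - 1 - j := by omega
    rw [e1, e2]
  rw [h1, Finset.sum_range_reflect (fun j => (-1:ℝ)^(n-1-j) * L^j / (Nat.factorial j)) n]
  rw [S, Finset.mul_sum]
  apply Finset.sum_congr rfl
  intro j hj
  have hj' := Finset.mem_range.mp hj
  have e : (-1:ℝ)^(n-1-j) = (-1:ℝ)^(n-1) * (-1:ℝ)^j := by
    have : n - 1 - j + j = n - 1 := by omega
    calc (-1:ℝ)^(n-1-j) = (-1:ℝ)^(n-1-j) * ((-1:ℝ)^j * (-1:ℝ)^j) := by
          rw [← pow_add]; simp [pow_mul, ← two_mul]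
      _ = (-1:ℝ)^(n-1-j+j) * (-1:ℝ)^j := by rw [pow_add]; ring
      _ = (-1:ℝ)^(n-1) * (-1:ℝ)^j := by rw [this]
  rw [e, neg_pow L]
  ring

lemma g_eq (n : ℕ) (R : ℝ) :
    g (n+1) R = Real.exp (R * Real.log 2) * A (n+1) (R * Real.log 2) := by
  set L := R * Real.log 2 with hLdef
  have h2R : (2:ℝ)^R = Real.exp L := by
    rw [Real.rpow_def_of_pos (by norm_num : (0:ℝ) < 2)]
    rw [hLdef, mul_comm]
  rw [g, h2R, sum_reflect (n+1) L, A]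
  have hee : Real.exp L * Real.exp (-L) = 1 := by
    rw [← Real.exp_add]; simp
  simp only [Nat.add_sub_cancel, pow_succ]
  linear_combination ((-1:ℝ)^n) * hee

theorem stmt_14 (k : ℕ) (hk : 2 ≤ k) (R : ℝ) (hR : 0 ≤ R) :
    R * Real.log 2 / (k : ℝ) * g (k - 1) R - g k R ≤ 0 := by
  obtain ⟨m, rfl⟩ : ∃ m, k = m + 2 := ⟨k - 2, by omega⟩
  have hk1 : m + 2 - 1 = m + 1 := by omega
  rw [hk1]
  set L := R * Real.log 2 with hLdef
  have hL : 0 ≤ L := mul_nonneg hR (Real.log_nonneg (by norm_num))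
  rw [g_eq m R, g_eq (m+1) R]
  rw [← hLdef]
  have hA : A (m+1+1) L = L^(m+1) / (Nat.factorial (m+1)) - A (m+1) L := by
    have := A_succ (m+1) L; linarith
  have hF := F_nonneg (m+1) L hL
  have hexp : 0 < Real.exp L := Real.exp_pos _
  have hk2 : (0:ℝ) < ((m:ℝ)+2) := by positivity
  have hcast : ((m + 2 : ℕ) : ℝ) = (m:ℝ) + 2 := by push_cast; ring
  rw [hcast, hA]
  have key : L / ((m:ℝ)+2) * A (m+1) L - (L^(m+1) / (Nat.factorial (m+1)) - A (m+1) L)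
      = -(F (m+1) L) / ((m:ℝ)+2) := by
    simp only [F]
    push_cast
    field_simp
    ring
  calc L / ((m:ℝ)+2) * (Real.exp L * A (m+1) L) - Real.exp L * (L^(m+1) / (Nat.factorial (m+1)) - A (m+1) L)
      = Real.exp L * (-(F (m+1) L) / ((m:ℝ)+2)) := by rw [← key]; ring
    _ ≤ 0 := by
        apply mul_nonpos_of_nonneg_of_nonpos (le_of_lt hexp)
        apply div_nonpos_of_nonpos_of_nonneg <;> linarith
end

section
/- For every integer k ≥ 1, the function 𝒢_k(R) = g_k(R)/(R · g_{k−1}(R)) is monotonically non-decreasing in R on (0, ∞). -/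
open Real Set

lemma g_zero (R : ℝ) : g 0 R = 1 := by simp [g]

lemma g_succ (k : ℕ) (R : ℝ) :
    g (k+1) R = (2:ℝ)^R * (R * Real.log 2)^k / (Nat.factorial k) - g k R := by
  unfold g
  rw [Finset.sum_range_succ']
  simp only [Nat.succ_sub_succ, pow_succ, pow_zero, one_mul, Nat.sub_zero, Nat.add_sub_cancel]
  rw [show (∑ j ∈ Finset.range k, (-1:ℝ)^j * -1 * (R * Real.log 2)^(k - j - 1) /
      (Nat.factorial (k - j - 1))) = -∑ j ∈ Finset.range k, (-1:ℝ)^j * (R * Real.log 2)^(k - j - 1) /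
      (Nat.factorial (k - j - 1)) by
    rw [← Finset.sum_neg_distrib]
    exact Finset.sum_congr rfl fun j _ => by ring]
  ring

lemma g_one (R : ℝ) : g 1 R = (2:ℝ)^R - 1 := by
  rw [g_succ, g_zero]; simp

lemma g_at_zero (k : ℕ) : g (k+1) 0 = 0 := by
  induction k with
  | zero => simp [g_one]
  | succ n ih => rw [g_succ, ih]; simp [Real.rpow_zero]

lemma two_pos' : (0:ℝ) < 2 := by norm_num

lemma hasDerivAt_two_rpow (R : ℝ) :
    HasDerivAt (fun x : ℝ => (2:ℝ)^x) ((2:ℝ)^R * Real.log 2) R :=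
  (Real.hasStrictDerivAt_const_rpow two_pos' R).hasDerivAt

lemma aux_pow (k : ℕ) (R : ℝ) :
    (2:ℝ)^R * (R * Real.log 2)^k / (Nat.factorial k) = g (k+1) R + g k R := by
  rw [g_succ]; ring

lemma hasDerivAt_g (k : ℕ) (R : ℝ) :
    HasDerivAt (fun x => g (k+1) x) (Real.log 2 * (g (k+1) R + g k R)) R := by
  induction k generalizing R with
  | zero =>
    have h : (fun x => g 1 x) = fun x => (2:ℝ)^x - 1 := funext fun x => g_one x
    rw [h]
    have := (hasDerivAt_two_rpow R).sub_const 1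
    refine this.congr_deriv ?_
    rw [g_one, g_zero]; ring
  | succ n ih =>
    have h : (fun x => g (n+2) x)
        = fun x => (2:ℝ)^x * (x * Real.log 2)^(n+1) / (Nat.factorial (n+1)) - g (n+1) x :=
      funext fun x => g_succ (n+1) x
    rw [h]
    have h1 : HasDerivAt (fun x : ℝ => (x * Real.log 2)^(n+1))
        ((n+1) * (R * Real.log 2)^n * Real.log 2) R := by
      have := ((hasDerivAt_id R).mul_const (Real.log 2)).pow (n+1)
      refine this.congr_deriv ?_
      simp
    have h2 : HasDerivAt (fun x : ℝ => (2:ℝ)^x * (x * Real.log 2)^(n+1) / (Nat.factorial (n+1)))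
        ((((2:ℝ)^R * Real.log 2) * (R * Real.log 2)^(n+1)
          + (2:ℝ)^R * ((n+1) * (R * Real.log 2)^n * Real.log 2)) / (Nat.factorial (n+1))) R :=
      ((hasDerivAt_two_rpow R).mul h1).div_const _
    have h3 := h2.sub (ih R)
    refine h3.congr_deriv (Eq.symm ?_)
    have e1 : (2:ℝ)^R * (R * Real.log 2)^(n+1) = (g (n+1+1) R + g (n+1) R) * (Nat.factorial (n+1)) := by
      rw [← aux_pow]
      field_simp
    have e2 : (2:ℝ)^R * (R * Real.log 2)^n = (g (n+1) R + g n R) * (Nat.factorial n) := by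
      rw [← aux_pow]
      field_simp
    have hfac : (Nat.factorial (n+1) : ℝ) = (n+1) * (Nat.factorial n) := by
      rw [Nat.factorial_succ]; push_cast; ring
    have hfacpos : (0:ℝ) < Nat.factorial (n+1) := by positivity
    have hne : ((Nat.factorial (n+1) : ℝ)) ≠ 0 := ne_of_gt hfacpos
    rw [hfac] at e1
    have key : Real.log 2 * (g (n+1+1) R + g (n+1) R) * ((Nat.factorial (n+1)):ℝ)
        = 2^R * Real.log 2 * (R * Real.log 2)^(n+1)
          + 2^R * (((n:ℝ)+1) * (R * Real.log 2)^n * Real.log 2)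
          - Real.log 2 * (g (n+1) R + g n R) * ((Nat.factorial (n+1)):ℝ) := by
      rw [hfac]
      linear_combination (-Real.log 2) * e1 - Real.log 2 * ((n:ℝ)+1) * e2
    rw [eq_sub_iff_add_eq, eq_div_iff hne]
    linear_combination key

noncomputable def G (k : ℕ) (R : ℝ) : ℝ := g k R * (2:ℝ)^(-R)

lemma hasDerivAt_neg_rpow (R : ℝ) :
    HasDerivAt (fun x : ℝ => (2:ℝ)^(-x)) (-((2:ℝ)^(-R) * Real.log 2)) R := by
  have h := (hasDerivAt_two_rpow (-R)).comp R (hasDerivAt_neg R)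
  refine h.congr_deriv ?_
  ring

lemma G_zero_eq (R : ℝ) : G 0 R = (2:ℝ)^(-R) := by simp [G, g_zero]

lemma hasDerivAt_G0 (R : ℝ) :
    HasDerivAt (fun x => G 0 x) (-((2:ℝ)^(-R) * Real.log 2)) R := by
  have : (fun x => G 0 x) = fun x : ℝ => (2:ℝ)^(-x) := funext fun x => G_zero_eq x
  rw [this]; exact hasDerivAt_neg_rpow R

lemma hasDerivAt_G (k : ℕ) (R : ℝ) :
    HasDerivAt (fun x => G (k+1) x) (Real.log 2 * G k R) R := by
  have h := (hasDerivAt_g k R).mul (hasDerivAt_neg_rpow R)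
  have : (fun x => G (k+1) x) = fun x => g (k+1) x * (2:ℝ)^(-x) := rfl
  rw [this]
  refine h.congr_deriv ?_
  unfold G
  ring

lemma G_at_zero (k : ℕ) : G (k+1) 0 = 0 := by simp [G, g_at_zero]

lemma G_pos (k : ℕ) : ∀ R ∈ Set.Ioi (0:ℝ), 0 < G k R := by
  induction k with
  | zero => intro R _; rw [G_zero_eq]; positivity
  | succ n ih =>
    intro R hR
    have hcont : ContinuousOn (fun x => G (n+1) x) (Set.Icc 0 R) :=
      fun x _ => (hasDerivAt_G n x).differentiableAt.continuousAt.continuousWithinAt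
    have hmono : StrictMonoOn (fun x => G (n+1) x) (Set.Icc 0 R) := by
      apply strictMonoOn_of_deriv_pos (convex_Icc 0 R) hcont
      intro x hx
      rw [interior_Icc] at hx
      rw [(hasDerivAt_G n x).deriv]
      have := ih x hx.1
      have hlog : (0:ℝ) < Real.log 2 := Real.log_pos one_lt_two
      positivity
    have h0 : (0:ℝ) ∈ Set.Icc (0:ℝ) R := ⟨le_refl _, le_of_lt hR⟩
    have hRm : R ∈ Set.Icc (0:ℝ) R := ⟨le_of_lt hR, le_refl _⟩
    have h2 := hmono h0 hRm hR
    simp only at h2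
    rwa [G_at_zero] at h2

lemma ratio_mono (A B A' B' : ℝ → ℝ)
    (hA : ∀ x, HasDerivAt A (A' x) x) (hB : ∀ x, HasDerivAt B (B' x) x)
    (hA0 : A 0 = 0) (hB0 : B 0 = 0)
    (hBpos : ∀ x ∈ Set.Ioi (0:ℝ), 0 < B x)
    (hB'pos : ∀ x ∈ Set.Ioi (0:ℝ), 0 < B' x)
    (cross : ∀ a b : ℝ, 0 < a → a ≤ b → A' a * B' b ≤ A' b * B' a) :
    MonotoneOn (fun x => A x / B x) (Set.Ioi 0) := by
  have key : ∀ R ∈ Set.Ioi (0:ℝ), A R * B' R ≤ A' R * B R := by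
    intro R hR
    set H : ℝ → ℝ := fun t => A' R * B t - B' R * A t with hH
    have hHd : ∀ t, HasDerivAt H (A' R * B' t - B' R * A' t) t := fun t =>
      ((hB t).const_mul (A' R)).sub ((hA t).const_mul (B' R))
    have hHmono : MonotoneOn H (Set.Icc 0 R) := by
      apply monotoneOn_of_deriv_nonneg (convex_Icc 0 R)
      · exact fun t _ => (hHd t).differentiableAt.continuousAt.continuousWithinAt
      · exact fun t _ => (hHd t).differentiableAt.differentiableWithinAt
      · intro t ht
        rw [interior_Icc] at ht
        rw [(hHd t).deriv]
        have := cross t R ht.1 (le_of_lt ht.2)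
        nlinarith [this]
    have h0 : (0:ℝ) ∈ Set.Icc (0:ℝ) R := ⟨le_refl _, le_of_lt hR⟩
    have hRm : R ∈ Set.Icc (0:ℝ) R := ⟨le_of_lt hR, le_refl _⟩
    have h2 := hHmono h0 hRm (le_of_lt hR)
    simp only [hH, hA0, hB0, mul_zero, sub_zero] at h2
    linarith
  apply monotoneOn_of_deriv_nonneg (convex_Ioi 0)
  · intro x hx
    exact (((hA x).div (hB x) (ne_of_gt (hBpos x hx))).differentiableAt).continuousAt.continuousWithinAt
  · intro x hx
    rw [interior_Ioi] at hx
    exact (((hA x).div (hB x) (ne_of_gt (hBpos x hx))).differentiableAt).differentiableWithinAt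
  · intro x hx
    rw [interior_Ioi] at hx
    rw [show deriv (fun x => A x / B x) x = _ from ((hA x).div (hB x) (ne_of_gt (hBpos x hx))).deriv]
    have h1 := key x hx
    have h2 := hBpos x hx
    apply div_nonneg _ (sq_nonneg _)
    nlinarith [h1]

lemma hlog2 : (0:ℝ) < Real.log 2 := Real.log_pos one_lt_two

lemma ratio_eq (k : ℕ) (R : ℝ) :
    g (k+1) R / (R * g k R) = G (k+1) R / (R * G k R) := by
  unfold G
  rw [show R * (g k R * (2:ℝ)^(-R)) = (R * g k R) * (2:ℝ)^(-R) by ring]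
  rw [mul_div_mul_right _ _ (ne_of_gt (Real.rpow_pos_of_pos two_pos' _))]

theorem stmt_16 (k : ℕ) (hk : 1 ≤ k) :
    MonotoneOn (fun R : ℝ => g k R / (R * g (k - 1) R)) (Set.Ioi 0) := by
  induction k, hk using Nat.le_induction with
  | base =>
    have e : (fun R : ℝ => g 1 R / (R * g (1-1) R)) = fun R : ℝ => ((2:ℝ)^R - 1) / R := by
      funext R; rw [show (1:ℕ)-1 = 0 from rfl, g_one, g_zero, mul_one]
    rw [e]
    apply ratio_mono (fun x => (2:ℝ)^x - 1) (fun x => x) (fun x => (2:ℝ)^x * Real.log 2)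
        (fun _ => 1)
    · exact fun x => (hasDerivAt_two_rpow x).sub_const 1
    · exact fun x => hasDerivAt_id x
    · simp [Real.rpow_zero]
    · rfl
    · exact fun x hx => hx
    · exact fun x _ => one_pos
    · intro a b ha hab
      rw [mul_one, mul_one]
      exact mul_le_mul_of_nonneg_right
        (Real.rpow_le_rpow_of_exponent_le one_le_two hab) (le_of_lt hlog2)
  | succ n hn ih =>
    obtain ⟨m, rfl⟩ : ∃ m, n = m + 1 := ⟨n - 1, by omega⟩
    simp only [Nat.add_sub_cancel] at ih ⊢
    have ihG : MonotoneOn (fun R : ℝ => G (m+1) R / (R * G m R)) (Set.Ioi 0) := by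
      have e : (fun R : ℝ => G (m+1) R / (R * G m R))
          = fun R : ℝ => g (m+1) R / (R * g m R) := funext fun R => (ratio_eq m R).symm
      rw [e]
      simpa only [Nat.add_sub_cancel] using ih
    have e2 : (fun R : ℝ => g (m+1+1) R / (R * g (m+1) R))
        = fun R : ℝ => G (m+1+1) R / (R * G (m+1) R) := funext fun R => ratio_eq (m+1) R
    rw [e2]
    apply ratio_mono (fun R => G (m+1+1) R) (fun R => R * G (m+1) R)
        (fun R => Real.log 2 * G (m+1) R)
        (fun R => G (m+1) R + R * (Real.log 2 * G m R))
    · exact fun x => hasDerivAt_G (m+1) x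
    · intro x
      have h := (hasDerivAt_id x).mul (hasDerivAt_G m x)
      refine h.congr_deriv (by simp)
    · exact G_at_zero (m+1)
    · exact zero_mul _
    · exact fun x hx => mul_pos hx (G_pos (m+1) x hx)
    · intro x hx
      have h1 := G_pos (m+1) x hx
      have h2 := G_pos m x hx
      have hx0 : (0:ℝ) < x := hx
      have := hlog2
      positivity
    · intro a b ha hab
      have hb : (0:ℝ) < b := lt_of_lt_of_le ha hab
      have hGa := G_pos (m+1) a ha
      have hGb := G_pos (m+1) b hb
      have hga := G_pos m a ha
      have hgb := G_pos m b hb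
      have hdiv := ihG (Set.mem_Ioi.mpr ha) (Set.mem_Ioi.mpr hb) hab
      simp only at hdiv
      rw [div_le_div_iff₀ (mul_pos ha hga) (mul_pos hb hgb)] at hdiv
      nlinarith [hdiv, hlog2, mul_pos hGa hGb, sq_nonneg (Real.log 2)]
end
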